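/- Let k be a field and A ∈ ASM(n). Then X_A is cut out by the essential rank conditions alone: X_A = {M ∈ Mat_n(k) : rank(M_{[i],[j]}) ≤ r_A(i,j) for all (i,j) ∈ Ess(A)}; that is, a matrix M satisfies rank(M_{[i],[j]}) ≤ r_A(i,j) for all 1 ≤ i,j ≤ n if and only if it satisfies these inequalities for all (i,j) ∈ Ess(A). -/

import Mathlib

/-- The entry of an `n × n` integer matrix in 1-based coordinates;
`0` outside the grid `[1,n] × [1,n]`. -/
def entry1 {n : ℕ} (A : Matrix (Fin n) (Fin n) ℤ) (i j : ℕ) : ℤ :=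
  if h : 1 ≤ i ∧ i ≤ n ∧ 1 ≤ j ∧ j ≤ n then
    A ⟨i - 1, by omega⟩ ⟨j - 1, by omega⟩ else 0

/-- The corner sum `r_A(i,j) = ∑_{k ≤ i} ∑_{l ≤ j} a_{k l}` (1-based). -/
def cornerSum {n : ℕ} (A : Matrix (Fin n) (Fin n) ℤ) (i j : ℕ) : ℤ :=
  ∑ k ∈ Finset.Icc 1 i, ∑ l ∈ Finset.Icc 1 j, entry1 A k l

/-- Partial row sum `∑_{l=1}^{j} a_{i l}`. -/
def rowPartial {n : ℕ} (A : Matrix (Fin n) (Fin n) ℤ) (i j : ℕ) : ℤ :=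
  ∑ l ∈ Finset.Icc 1 j, entry1 A i l

/-- Partial column sum `∑_{k=1}^{i} a_{k j}`. -/
def colPartial {n : ℕ} (A : Matrix (Fin n) (Fin n) ℤ) (i j : ℕ) : ℤ :=
  ∑ k ∈ Finset.Icc 1 i, entry1 A k j

/-- `A` is an alternating sign matrix: every partial row and column sum is `0`
or `1`, and every full row and column sums to `1`. -/
def IsASM {n : ℕ} (A : Matrix (Fin n) (Fin n) ℤ) : Prop :=
  (∀ i j : ℕ, rowPartial A i j = 0 ∨ rowPartial A i j = 1) ∧
  (∀ i j : ℕ, colPartial A i j = 0 ∨ colPartial A i j = 1) ∧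
  (∀ i : ℕ, 1 ≤ i → i ≤ n → rowPartial A i n = 1) ∧
  (∀ j : ℕ, 1 ≤ j → j ≤ n → colPartial A n j = 1)

/-- `A` is a partial alternating sign matrix: every partial row and column sum
is `0` or `1`. -/
def IsPartialASM {n : ℕ} (A : Matrix (Fin n) (Fin n) ℤ) : Prop :=
  (∀ i j : ℕ, rowPartial A i j = 0 ∨ rowPartial A i j = 1) ∧
  (∀ i j : ℕ, colPartial A i j = 0 ∨ colPartial A i j = 1)

/-- `(i,j)` (1-based) is in the Rothe diagram `D(A)`:
`∑_{k > i, l > j} a_{i l} a_{k j} = 1`. -/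
def InDiagram {n : ℕ} (A : Matrix (Fin n) (Fin n) ℤ) (i j : ℕ) : Prop :=
  (∑ k ∈ Finset.Icc 1 n, ∑ l ∈ Finset.Icc 1 n,
    (if i < k ∧ j < l then entry1 A i l * entry1 A k j else 0)) = 1

/-- `(i,j)` is in the essential set `Ess(A)`. -/
def InEss {n : ℕ} (A : Matrix (Fin n) (Fin n) ℤ) (i j : ℕ) : Prop :=
  InDiagram A i j ∧ ¬ InDiagram A (i + 1) j ∧ ¬ InDiagram A i (j + 1)

/-- The permutation matrix of `w` (a `1` in positions `(a, w a)`). -/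
def permMatrix {n : ℕ} (w : Equiv.Perm (Fin n)) : Matrix (Fin n) (Fin n) ℤ :=
  Matrix.of fun a b => if w a = b then 1 else 0

/-- The value `w(a)` of the permutation `w` in 1-based coordinates, extended by
the identity outside `[1,n]`. -/
def pval {n : ℕ} (w : Equiv.Perm (Fin n)) (a : ℕ) : ℕ :=
  if h : 1 ≤ a ∧ a ≤ n then ((w ⟨a - 1, by omega⟩ : Fin n) : ℕ) + 1 else a

/-- The value function (1-based) of the biGrassmannian permutation `[i,j,r]_b`. -/
def biGrFun (i j r a : ℕ) : ℕ :=
  if a ≤ r then a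
  else if a ≤ i then a + (j - r)
  else if a ≤ i + j - r then a - (i - r)
  else a

/-- The permutation matrix of the biGrassmannian permutation `[i,j,r]_b ∈ S_n`. -/
def biGrMatrix (n i j r : ℕ) : Matrix (Fin n) (Fin n) ℤ :=
  Matrix.of fun a b => if biGrFun i j r ((a : ℕ) + 1) = (b : ℕ) + 1 then 1 else 0

/-- `u ∈ S_n` is the biGrassmannian permutation `[i,j,r]_b`, i.e. its values
are given by the defining formula. -/
def IsBiGrPerm (n i j r : ℕ) (u : Equiv.Perm (Fin n)) : Prop :=
  ∀ a : ℕ, 1 ≤ a → a ≤ n → pval u a = biGrFun i j r a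

/-- `(a,b)` (1-based) is in the Rothe diagram of the permutation `w`:
`w(a) > b` and `w⁻¹(b) > a`. -/
def InPermDiagram {n : ℕ} (w : Equiv.Perm (Fin n)) (a b : ℕ) : Prop :=
  1 ≤ a ∧ a ≤ n ∧ 1 ≤ b ∧ b ≤ n ∧ b < pval w a ∧ a < pval w⁻¹ b

/-- `(a,b)` is in the essential set of the permutation `w`. -/
def InPermEss {n : ℕ} (w : Equiv.Perm (Fin n)) (a b : ℕ) : Prop :=
  InPermDiagram w a b ∧ ¬ InPermDiagram w (a + 1) b ∧ ¬ InPermDiagram w a (b + 1)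

/-- `w` has a descent at (1-based) position `d`: `w(d) > w(d+1)`. -/
def HasDescentAt {n : ℕ} (w : Equiv.Perm (Fin n)) (d : ℕ) : Prop :=
  1 ≤ d ∧ d < n ∧ pval w (d + 1) < pval w d

/-- `u` is biGrassmannian: both `u` and `u⁻¹` have a unique descent. -/
def IsBiGrassmannian {n : ℕ} (u : Equiv.Perm (Fin n)) : Prop :=
  (∃! d : ℕ, HasDescentAt u d) ∧ (∃! d : ℕ, HasDescentAt u⁻¹ d)


/-!
The corner ranks `ρ i j = rank M_{[i],[j]}` vanish on the axes, are monotone, and grow by at most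
one when a row or a column is added. On the diagram of an ASM the partial row and column sums
vanish, so a non-essential diagram cell has a diagram neighbour below or to its right with the
same corner sum: walking down and right, every diagram cell inherits its bound from an
essential one. Off the diagram a partial row or column sum is `1`, so `r_A` grows by one from the
cell above or to the left, and induction on `i + j` closes the argument.
-/

open Finset Matrix

section Rank

variable {K : Type*} [Field K]

theorem Matrix.rank_le_rank_submatrix_castSucc_add_one {m : ℕ} {ι : Type*} [Fintype ι]
    (B : Matrix (Fin (m + 1)) ι K) :
    B.rank ≤ (B.submatrix Fin.castSucc id).rank + 1 := by
  have hrows : Set.range B.row =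
      insert (B.row (Fin.last m)) (Set.range (B.submatrix Fin.castSucc id).row) := by
    rw [← Fin.range_snoc]
    exact congrArg Set.range (Fin.snoc_init_self B.row).symm
  rw [rank_eq_finrank_span_row, rank_eq_finrank_span_row, hrows, Submodule.span_insert]
  refine (Submodule.finrank_add_le_finrank_add_finrank _ _).trans ?_
  rw [Nat.add_comm]
  gcongr
  simpa using finrank_span_le_card ({B.row (Fin.last m)} : Set (ι → K))

theorem Matrix.rank_le_rank_submatrix_id_castSucc_add_one {ι : Type*} [Fintype ι] {m : ℕ}
    (B : Matrix ι (Fin (m + 1)) K) :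
    B.rank ≤ (B.submatrix id Fin.castSucc).rank + 1 := by
  simpa [← transpose_submatrix] using Bᵀ.rank_le_rank_submatrix_castSucc_add_one

end Rank

section Corner

variable {R : Type*} {m n : ℕ}

/-- The top-left `i × j` corner of `M`, padded with zeros beyond the size of `M`. -/
def Matrix.topLeftCorner [Zero R] (M : Matrix (Fin m) (Fin n) R) (i j : ℕ) :
    Matrix (Fin i) (Fin j) R :=
  of fun a b => if h : (a : ℕ) < m ∧ (b : ℕ) < n then M ⟨a, h.1⟩ ⟨b, h.2⟩ else 0

variable [Zero R] (M : Matrix (Fin m) (Fin n) R)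

theorem Matrix.topLeftCorner_eq_submatrix {i j : ℕ} (hi : i ≤ m) (hj : j ≤ n) :
    M.topLeftCorner i j = M.submatrix (Fin.castLE hi) (Fin.castLE hj) := by
  ext a b
  simp [topLeftCorner, show (a : ℕ) < m by omega, show (b : ℕ) < n by omega]
  rfl

theorem Matrix.topLeftCorner_submatrix_castLE {i i' j j' : ℕ} (hi : i ≤ i') (hj : j ≤ j') :
    (M.topLeftCorner i' j').submatrix (Fin.castLE hi) (Fin.castLE hj) = M.topLeftCorner i j :=
  rfl

end Corner

theorem Matrix.rank_topLeftCorner_mono {K : Type*} [Field K] {m n : ℕ}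
    (M : Matrix (Fin m) (Fin n) K) {i i' j j' : ℕ} (hi : i ≤ i') (hj : j ≤ j') :
    (M.topLeftCorner i j).rank ≤ (M.topLeftCorner i' j').rank := by
  rw [← M.topLeftCorner_submatrix_castLE hi hj]
  exact rank_submatrix_le _ _ _

structure IsRankFunction (ρ : ℕ → ℕ → ℤ) : Prop where
  zero_left : ∀ j, ρ 0 j = 0
  zero_right : ∀ i, ρ i 0 = 0
  le_succ_left : ∀ i j, ρ i j ≤ ρ (i + 1) j
  le_succ_right : ∀ i j, ρ i j ≤ ρ i (j + 1)
  succ_left_le : ∀ i j, ρ (i + 1) j ≤ ρ i j + 1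
  succ_right_le : ∀ i j, ρ i (j + 1) ≤ ρ i j + 1

theorem Matrix.isRankFunction_rank_topLeftCorner {K : Type*} [Field K] {m n : ℕ}
    (M : Matrix (Fin m) (Fin n) K) :
    IsRankFunction fun i j => ((M.topLeftCorner i j).rank : ℤ) where
  zero_left j := by simpa using (M.topLeftCorner 0 j).rank_le_card_height
  zero_right i := by simpa using (M.topLeftCorner i 0).rank_le_card_width
  le_succ_left i j := by exact_mod_cast M.rank_topLeftCorner_mono (Nat.le_succ i) le_rfl
  le_succ_right i j := by exact_mod_cast M.rank_topLeftCorner_mono le_rfl (Nat.le_succ j)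
  succ_left_le i j := by
    have h : (M.topLeftCorner (i + 1) j).rank ≤ (M.topLeftCorner i j).rank + 1 :=
      (M.topLeftCorner (i + 1) j).rank_le_rank_submatrix_castSucc_add_one
    exact_mod_cast h
  succ_right_le i j := by
    have h : (M.topLeftCorner i (j + 1)).rank ≤ (M.topLeftCorner i j).rank + 1 :=
      (M.topLeftCorner i (j + 1)).rank_le_rank_submatrix_id_castSucc_add_one
    exact_mod_cast h

section Diagram

variable {n : ℕ}

theorem cornerSum_zero_left (A : Matrix (Fin n) (Fin n) ℤ) (j : ℕ) : cornerSum A 0 j = 0 := by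
  simp [cornerSum]

theorem cornerSum_zero_right (A : Matrix (Fin n) (Fin n) ℤ) (i : ℕ) : cornerSum A i 0 = 0 := by
  simp [cornerSum]

theorem cornerSum_succ_left (A : Matrix (Fin n) (Fin n) ℤ) (i j : ℕ) :
    cornerSum A (i + 1) j = cornerSum A i j + rowPartial A (i + 1) j :=
  sum_Icc_succ_top (Nat.le_add_left 1 i) _

theorem cornerSum_succ_right (A : Matrix (Fin n) (Fin n) ℤ) (i j : ℕ) :
    cornerSum A i (j + 1) = cornerSum A i j + colPartial A i (j + 1) := by
  simp only [cornerSum, colPartial, sum_Icc_succ_top (Nat.le_add_left 1 j), sum_add_distrib]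

variable {A : Matrix (Fin n) (Fin n) ℤ}

theorem InDiagram.bounds {i j : ℕ} (h : InDiagram A i j) : 1 ≤ i ∧ i ≤ n ∧ 1 ≤ j ∧ j ≤ n := by
  by_contra hout
  refine absurd h (ne_of_eq_of_ne (sum_eq_zero fun k hk => sum_eq_zero fun l _ => ?_) zero_ne_one)
  rw [mem_Icc] at hk
  have hzero : entry1 A i l = 0 ∨ entry1 A k j = 0 := by
    by_cases hi : 1 ≤ i ∧ i ≤ n
    · exact Or.inr (dif_neg (by omega))
    · exact Or.inl (dif_neg (by omega))
  rcases hzero with h0 | h0 <;> simp [h0]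

theorem sum_Icc_ite_lt (x : ℕ → ℤ) {j n : ℕ} (hj : j ≤ n) :
    ∑ l ∈ Icc 1 n, (if j < l then x l else 0) = ∑ l ∈ Icc 1 n, x l - ∑ l ∈ Icc 1 j, x l := by
  rw [← sum_filter, eq_sub_iff_add_eq, ← sum_union]
  · congr 1
    ext l
    simp only [mem_union, mem_filter, mem_Icc]
    omega
  · rw [disjoint_left]
    simp only [mem_filter, mem_Icc]
    omega

theorem IsASM.sum_diagram_eq (hA : IsASM A) {i j : ℕ} (hi : 1 ≤ i) (hin : i ≤ n) (hj : 1 ≤ j)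
    (hjn : j ≤ n) :
    ∑ k ∈ Icc 1 n, ∑ l ∈ Icc 1 n, (if i < k ∧ j < l then entry1 A i l * entry1 A k j else 0) =
      (1 - rowPartial A i j) * (1 - colPartial A i j) := by
  have hfactor :
      ∑ k ∈ Icc 1 n, ∑ l ∈ Icc 1 n, (if i < k ∧ j < l then entry1 A i l * entry1 A k j else 0) =
        (∑ k ∈ Icc 1 n, if i < k then entry1 A k j else 0) *
          ∑ l ∈ Icc 1 n, if j < l then entry1 A i l else 0 := by
    rw [sum_mul_sum]
    refine sum_congr rfl fun k _ => sum_congr rfl fun l _ => ?_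
    rw [ite_zero_mul_ite_zero, mul_comm]
  rw [hfactor, sum_Icc_ite_lt _ hin, sum_Icc_ite_lt _ hjn]
  have hrow : rowPartial A i n = 1 := hA.2.2.1 i hi hin
  have hcol : colPartial A n j = 1 := hA.2.2.2 j hj hjn
  simp only [rowPartial, colPartial] at hrow hcol ⊢
  rw [hrow, hcol, mul_comm]

theorem IsASM.inDiagram_iff (hA : IsASM A) {i j : ℕ} (hi : 1 ≤ i) (hin : i ≤ n) (hj : 1 ≤ j)
    (hjn : j ≤ n) :
    InDiagram A i j ↔ rowPartial A i j = 0 ∧ colPartial A i j = 0 := by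
  rw [InDiagram, hA.sum_diagram_eq hi hin hj hjn]
  rcases hA.1 i j with h | h <;> rcases hA.2.1 i j with h' | h' <;> simp [h, h']

theorem IsASM.rowPartial_eq_one_or_colPartial_eq_one (hA : IsASM A) {i j : ℕ}
    (hi : 1 ≤ i) (hin : i ≤ n) (hj : 1 ≤ j) (hjn : j ≤ n)
    (hD : ¬ InDiagram A i j) : rowPartial A i j = 1 ∨ colPartial A i j = 1 := by
  rw [hA.inDiagram_iff hi hin hj hjn] at hD
  rcases hA.1 i j with h | h <;> rcases hA.2.1 i j with h' | h' <;> simp_all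

end Diagram

section EssentialSet

variable {n : ℕ} {A : Matrix (Fin n) (Fin n) ℤ} {ρ : ℕ → ℕ → ℤ}

theorem IsASM.le_cornerSum_of_inDiagram (hA : IsASM A) (hρ : IsRankFunction ρ)
    (hess : ∀ i j, InEss A i j → ρ i j ≤ cornerSum A i j) {i j : ℕ} (hD : InDiagram A i j) :
    ρ i j ≤ cornerSum A i j := by
  by_cases hE : InEss A i j
  · exact hess i j hE
  obtain hD' | hD' : InDiagram A (i + 1) j ∨ InDiagram A i (j + 1) := by
    unfold InEss at hE
    tauto
  · obtain ⟨hi, hin, hj, hjn⟩ := hD'.bounds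
    calc ρ i j ≤ ρ (i + 1) j := hρ.le_succ_left i j
      _ ≤ cornerSum A (i + 1) j := hA.le_cornerSum_of_inDiagram hρ hess hD'
      _ = cornerSum A i j := by
        rw [cornerSum_succ_left, ((hA.inDiagram_iff hi hin hj hjn).mp hD').1, add_zero]
  · obtain ⟨hi, hin, hj, hjn⟩ := hD'.bounds
    calc ρ i j ≤ ρ i (j + 1) := hρ.le_succ_right i j
      _ ≤ cornerSum A i (j + 1) := hA.le_cornerSum_of_inDiagram hρ hess hD'
      _ = cornerSum A i j := by
        rw [cornerSum_succ_right, ((hA.inDiagram_iff hi hin hj hjn).mp hD').2, add_zero]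
termination_by 2 * n - (i + j)
decreasing_by all_goals omega

theorem IsASM.le_cornerSum (hA : IsASM A) (hρ : IsRankFunction ρ)
    (hess : ∀ i j, InEss A i j → ρ i j ≤ cornerSum A i j) :
    ∀ {i j : ℕ}, i ≤ n → j ≤ n → ρ i j ≤ cornerSum A i j
  | 0, j, _, _ => by rw [hρ.zero_left, cornerSum_zero_left]
  | i + 1, 0, _, _ => by rw [hρ.zero_right, cornerSum_zero_right]
  | i + 1, j + 1, hin, hjn => by
    by_cases hD : InDiagram A (i + 1) (j + 1)
    · exact hA.le_cornerSum_of_inDiagram hρ hess hD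
    rcases hA.rowPartial_eq_one_or_colPartial_eq_one (by omega) hin (by omega) hjn hD with h | h
    · calc ρ (i + 1) (j + 1) ≤ ρ i (j + 1) + 1 := hρ.succ_left_le i (j + 1)
        _ ≤ cornerSum A i (j + 1) + 1 := by grw [hA.le_cornerSum hρ hess (by omega) hjn]
        _ = cornerSum A (i + 1) (j + 1) := by rw [cornerSum_succ_left, h]
    · calc ρ (i + 1) (j + 1) ≤ ρ (i + 1) j + 1 := hρ.succ_right_le (i + 1) j
        _ ≤ cornerSum A (i + 1) j + 1 := by grw [hA.le_cornerSum hρ hess hin (by omega)]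
        _ = cornerSum A (i + 1) (j + 1) := by rw [cornerSum_succ_right, h]

end EssentialSet

/-- For a field `K` and `A ∈ ASM(n)`, the ASM variety `X_A` is
cut out by the essential rank conditions alone: a matrix `M` satisfies
`rank M_{[i],[j]} ≤ r_A(i,j)` for all `1 ≤ i,j ≤ n` iff it satisfies these
inequalities for all `(i,j) ∈ Ess(A)`. -/
theorem stmt17 {K : Type*} [Field K] {n : ℕ}
    (A : Matrix (Fin n) (Fin n) ℤ) (hA : IsASM A)
    (M : Matrix (Fin n) (Fin n) K) :
    (∀ (i j : ℕ) (hi : i ≤ n) (hj : j ≤ n), 1 ≤ i → 1 ≤ j →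
      ((M.submatrix (Fin.castLE hi) (Fin.castLE hj)).rank : ℤ) ≤
        cornerSum A i j) ↔
    (∀ (i j : ℕ) (hi : i ≤ n) (hj : j ≤ n), InEss A i j →
      ((M.submatrix (Fin.castLE hi) (Fin.castLE hj)).rank : ℤ) ≤
        cornerSum A i j) := by
  constructor
  · intro h i j hi hj hE
    obtain ⟨h1i, -, h1j, -⟩ := hE.1.bounds
    exact h i j hi hj h1i h1j
  · intro hess i j hi hj _ _
    rw [← M.topLeftCorner_eq_submatrix hi hj]
    refine hA.le_cornerSum M.isRankFunction_rank_topLeftCorner (fun i j hE => ?_) hi hj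
    obtain ⟨-, hi, -, hj⟩ := hE.1.bounds
    simpa only [M.topLeftCorner_eq_submatrix hi hj] using hess i j hi hj hE
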